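/- arXiv:2107.05435 — 4 statements merged into one kernel-verified Lean document; each statement's English description precedes it below -/
import Mathlib

section
/- If a pair of monomials (u,v) of the same degree is sorted (i.e. sort(u,v) = (u,v)), then u ≥ v in the lexicographic order on monomials. -/
/-- Split a list into (odd-position entries, even-position entries), positions counted from 1. -/
def altSplit {α : Type*} : List α → List α × List α
  | [] => ([], [])
  | a :: l => (a :: (altSplit l).2, (altSplit l).1)

/-- The weakly increasing list of indices of a monomial (viewed as a multiset of variable indices). -/
def mSort (m : Multiset ℕ) : List ℕ := m.sort (· ≤ ·)

/-- The sorting operator: merge the indices of `u` and `v` in weakly increasing order and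
give the odd positions to the first component, the even positions to the second. -/
def sortPair (u v : Multiset ℕ) : Multiset ℕ × Multiset ℕ :=
  (↑(altSplit (mSort (u + v))).1, ↑(altSplit (mSort (u + v))).2)

/-- A pair of monomials is sorted if the sorting operator fixes it (up to swapping). -/
def SortedPair (u v : Multiset ℕ) : Prop :=
  sortPair u v = (u, v) ∨ sortPair u v = (v, u)

/-- A monomial is `t`-spread if consecutive indices (in weakly increasing order) differ by ≥ t. -/
def TSpread (t : ℕ) (m : Multiset ℕ) : Prop :=
  (mSort m).Chain' (fun a b => a + t ≤ b)

/-- `v` is componentwise dominated by `u`. -/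
def Dominates (v u : Multiset ℕ) : Prop :=
  List.Forall₂ (· ≤ ·) (mSort v) (mSort u)

/-- The minimal generators of the t-spread principal Borel ideal `B_t(u)`:
t-spread monomials of the same degree componentwise dominated by `u`. -/
def BtGens (t : ℕ) (u : Multiset ℕ) : Set (Multiset ℕ) :=
  {v | Multiset.card v = Multiset.card u ∧ TSpread t v ∧ Dominates v u}

/-- The sorted graph of `B_t(u)`: vertices the minimal generators, edges the sorted pairs. -/
def sortedGraph (t : ℕ) (u : Multiset ℕ) : SimpleGraph ↥(BtGens t u) :=
  SimpleGraph.fromRel (fun v w => SortedPair v.1 w.1)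

/-- The graph has an induced cycle of length `n ≥ 4`. -/
def HasInducedCycle {V : Type*} (G : SimpleGraph V) : Prop :=
  ∃ n : ℕ, 4 ≤ n ∧ ∃ f : ZMod n → V, Function.Injective f ∧
    ∀ i j : ZMod n, G.Adj (f i) (f j) ↔ (j = i + 1 ∨ i = j + 1)

/-!
If `sort(u, v) = (u, v)` and `a₁ ≤ a₂ ≤ ⋯ ≤ a₂d` are the merged indices of `uv`, then the `i`-th
index of `u` is `a₂ᵢ₋₁` and that of `v` is `a₂ᵢ`, so `u` is componentwise below `v`; componentwise
domination of index sequences implies the lexicographic comparison.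
-/

theorem altSplit_sublist {α : Type*} :
    ∀ L : List α, (altSplit L).1.Sublist L ∧ (altSplit L).2.Sublist L
  | [] => ⟨.slnil, .slnil⟩
  | a :: l =>
    have ih := altSplit_sublist l
    ⟨ih.2.cons_cons a, ih.1.cons a⟩

theorem forall₂_altSplit_of_isChain {α : Type*} {R : α → α → Prop} :
    ∀ {L : List α}, L.IsChain R → (altSplit L).1.length = (altSplit L).2.length →
      List.Forall₂ R (altSplit L).1 (altSplit L).2
  | [], _, _ => .nil
  | [_], _, hlen => by simp [altSplit] at hlen
  | _ :: _ :: l, hchain, hlen => by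
    rw [List.isChain_cons_cons] at hchain
    exact .cons hchain.1 <| forall₂_altSplit_of_isChain (L := l) hchain.2.tail
      (by simpa [altSplit] using hlen)

theorem List.Forall₂.eq_or_lex_lt {α : Type*} [PartialOrder α] {A B : List α}
    (h : List.Forall₂ (· ≤ ·) A B) : A = B ∨ List.Lex (· < ·) A B := by
  induction h with
  | nil => exact .inl rfl
  | cons hab _ ih =>
    rcases hab.lt_or_eq with hlt | rfl
    · exact .inr (.rel hlt)
    · rcases ih with rfl | hlex
      · exact .inl rfl
      · exact .inr (.cons hlex)

theorem mSort_coe_of_pairwise {A : List ℕ} (hA : A.Pairwise (· ≤ ·)) : mSort A = A := by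
  rw [mSort, Multiset.coe_sort]
  exact List.mergeSort_eq_self _ hA

/-- if sort(u,v) = (u,v) then u ≥ v in lexicographic order
(at the first position where the sorted index sequences differ, u has the smaller index). -/
theorem sorted_pair_lex (d : ℕ) (u v : Multiset ℕ)
    (hu : Multiset.card u = d) (hv : Multiset.card v = d)
    (h : sortPair u v = (u, v)) :
    mSort u = mSort v ∨ List.Lex (· < ·) (mSort u) (mSort v) := by
  set L := mSort (u + v)
  have hL : L.Pairwise (· ≤ ·) := Multiset.pairwise_sort ..
  have hu' : ((altSplit L).1 : Multiset ℕ) = u := congrArg Prod.fst h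
  have hv' : ((altSplit L).2 : Multiset ℕ) = v := congrArg Prod.snd h
  have hlen : (altSplit L).1.length = (altSplit L).2.length := by
    rw [← Multiset.coe_card, ← Multiset.coe_card, hu', hv', hu, hv]
  obtain ⟨hsub₁, hsub₂⟩ := altSplit_sublist L
  rw [← hu', ← hv', mSort_coe_of_pairwise (hL.sublist hsub₁),
    mSort_coe_of_pairwise (hL.sublist hsub₂)]
  exact (forall₂_altSplit_of_isChain hL.isChain hlen).eq_or_lex_lt
end

section
/- Sortedness of pairs of t-spread monomials starting with variable x_1 is invariant under deleting x_1 and shifting indices down by t: for t-spread monomials u_1 = x_1 x_{i_2}···x_{i_d} and u_2 = x_1 x_{j_2}···x_{j_d} of degree d, the pair (u_1,u_2) is sorted if and only if the pair (x_{i_2−t}···x_{i_d−t}, x_{j_2−t}···x_{j_d−t}) is sorted. -/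
/-! Two equal entries that are adjacent in a weakly increasing list fall into different halves
of its alternating split, so an index common to both monomials can be cancelled from a pair without
changing sortedness. After cancelling `x₁`, `t`-spreadness leaves only indices `0` or `> t` (indices
range over `ℕ`, and `0 - t = 0`); on these `x ↦ x - t` is monotone and injective, so it commutes with
sorting and reflects the equalities that define a sorted pair. -/

lemma Multiset.injOn_map {α β : Type*} {f : α → β} {s : Set α} (hf : s.InjOn f) :
    {m : Multiset α | ∀ x ∈ m, x ∈ s}.InjOn (Multiset.map f) := by
  rcases isEmpty_or_nonempty α with _ | _
  · exact fun u _ v _ _ => Subsingleton.elim u v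
  · refine Set.LeftInvOn.injOn (f₁' := Multiset.map (Function.invFunOn f s)) fun m hm => ?_
    rw [Multiset.map_map]
    exact (Multiset.map_congr rfl fun x hx => hf.leftInvOn_invFunOn (hm x hx)).trans
      (Multiset.map_id m)

lemma altSplit_perm {α : Type*} : ∀ l : List α, ((altSplit l).1 ++ (altSplit l).2).Perm l
  | [] => .nil
  | a :: l => by
    simpa [altSplit] using (List.perm_append_comm.trans (altSplit_perm l))

lemma altSplit_map {α β : Type*} (f : α → β) :
    ∀ l : List α, altSplit (l.map f) = ((altSplit l).1.map f, (altSplit l).2.map f)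
  | [] => rfl
  | a :: l => by simp [altSplit, altSplit_map f l]

lemma altSplit_append_cons_cons {α : Type*} (x : α) (l₂ : List α) :
    ∀ l₁ : List α,
      ((altSplit (l₁ ++ x :: x :: l₂)).1 : Multiset α) = x ::ₘ (altSplit (l₁ ++ l₂)).1 ∧
      ((altSplit (l₁ ++ x :: x :: l₂)).2 : Multiset α) = x ::ₘ (altSplit (l₁ ++ l₂)).2
  | [] => by simp [altSplit]
  | a :: l₁ => by
    obtain ⟨h₁, h₂⟩ := altSplit_append_cons_cons x l₂ l₁
    simp only [List.cons_append, altSplit, ← Multiset.cons_coe, h₁, h₂]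
    exact ⟨Multiset.cons_swap _ _ _, trivial⟩

lemma coe_mSort (m : Multiset ℕ) : (mSort m : Multiset ℕ) = m :=
  Multiset.sort_eq _ _

lemma pairwise_mSort (m : Multiset ℕ) : (mSort m).Pairwise (· ≤ ·) :=
  Multiset.pairwise_sort _ _

lemma mSort_eq_of_pairwise {m : Multiset ℕ} {l : List ℕ} (hl : l.Pairwise (· ≤ ·))
    (hm : (l : Multiset ℕ) = m) : mSort m = l :=
  List.Perm.eq_of_pairwise' (pairwise_mSort m) hl <| Multiset.coe_eq_coe.mp <| by
    rw [coe_mSort, hm]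

lemma mSort_map_of_monotone {f : ℕ → ℕ} (hf : Monotone f) (m : Multiset ℕ) :
    mSort (m.map f) = (mSort m).map f :=
  mSort_eq_of_pairwise ((pairwise_mSort m).map f fun _ _ h => hf h) <| by
    rw [← Multiset.map_coe, coe_mSort]

lemma exists_mSort_cons_cons (a : ℕ) (m : Multiset ℕ) :
    ∃ l₁ l₂, mSort m = l₁ ++ l₂ ∧ mSort (a ::ₘ a ::ₘ m) = l₁ ++ a :: a :: l₂ := by
  have hm := pairwise_mSort m
  set l₁ := (mSort m).filter (· < a)
  set l₂ := (mSort m).filter (fun x => !decide (x < a))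
  have hl₁ : ∀ x ∈ l₁, x < a := fun x hx => by simpa using (List.mem_filter.1 hx).2
  have hl₂ : ∀ y ∈ l₂, a ≤ y := fun y hy => by simpa using (List.mem_filter.1 hy).2
  refine ⟨l₁, l₂, ?_, ?_⟩
  · refine mSort_eq_of_pairwise ?_ ?_
    · exact List.pairwise_append.2 ⟨hm.filter _, hm.filter _,
        fun x hx y hy => (hl₁ x hx).le.trans (hl₂ y hy)⟩
    · rw [Multiset.coe_eq_coe.mpr (List.filter_append_perm _ _), coe_mSort]
  · refine mSort_eq_of_pairwise ?_ ?_
    · simp only [List.pairwise_append, List.pairwise_cons, List.mem_cons]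
      refine ⟨hm.filter _, ⟨?_, hl₂, hm.filter _⟩, ?_⟩
      · rintro y (rfl | hy)
        exacts [le_rfl, hl₂ y hy]
      · rintro x hx y (rfl | rfl | hy)
        exacts [(hl₁ x hx).le, (hl₁ x hx).le, (hl₁ x hx).le.trans (hl₂ y hy)]
    · rw [Multiset.coe_eq_coe.mpr List.perm_middle, ← Multiset.cons_coe,
        Multiset.coe_eq_coe.mpr List.perm_middle, ← Multiset.cons_coe,
        Multiset.coe_eq_coe.mpr (List.filter_append_perm _ _), coe_mSort]

lemma TSpread.pairwise {t : ℕ} {l : List ℕ} (h : TSpread t l) :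
    l.Pairwise (fun a b => a + t ≤ b ∨ b + t ≤ a) := by
  have : Trans (fun a b : ℕ => a + t ≤ b) (fun a b => a + t ≤ b) (fun a b => a + t ≤ b) :=
    ⟨fun hab hbc => by omega⟩
  exact (List.Perm.pairwise_iff (fun h => h.symm) (Multiset.coe_eq_coe.1 (coe_mSort l))).1
    ((List.isChain_iff_pairwise.1 h).imp Or.inl)

lemma sortPair_fst_add_snd (u v : Multiset ℕ) : (sortPair u v).1 + (sortPair u v).2 = u + v := by
  rw [sortPair, Multiset.coe_add, Multiset.coe_eq_coe.2 (altSplit_perm _), coe_mSort]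

lemma sortPair_cons_cons (a : ℕ) (u v : Multiset ℕ) :
    sortPair (a ::ₘ u) (a ::ₘ v) = (a ::ₘ (sortPair u v).1, a ::ₘ (sortPair u v).2) := by
  obtain ⟨l₁, l₂, h, h'⟩ := exists_mSort_cons_cons a (u + v)
  obtain ⟨h₁, h₂⟩ := altSplit_append_cons_cons a l₂ l₁
  rw [sortPair, sortPair, Multiset.cons_add, Multiset.add_cons, h', h, h₁, h₂]

lemma sortPair_map {f : ℕ → ℕ} (hf : Monotone f) (u v : Multiset ℕ) :
    sortPair (u.map f) (v.map f) = ((sortPair u v).1.map f, (sortPair u v).2.map f) := by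
  rw [sortPair, sortPair, ← Multiset.map_add, mSort_map_of_monotone hf, altSplit_map]
  simp only [Multiset.map_coe]

lemma sortedPair_cons_cons_iff (a : ℕ) (u v : Multiset ℕ) :
    SortedPair (a ::ₘ u) (a ::ₘ v) ↔ SortedPair u v := by
  simp only [SortedPair, sortPair_cons_cons, Prod.ext_iff, Multiset.cons_inj_right]

lemma sortedPair_map_iff {f : ℕ → ℕ} {u v : Multiset ℕ} (hf : Monotone f)
    (hinj : {x | x ∈ u + v}.InjOn f) :
    SortedPair (u.map f) (v.map f) ↔ SortedPair u v := by
  have hS := Multiset.injOn_map hinj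
  have hu : ∀ x ∈ u, x ∈ u + v := fun x hx => Multiset.mem_add.2 (Or.inl hx)
  have hv : ∀ x ∈ v, x ∈ u + v := fun x hx => Multiset.mem_add.2 (Or.inr hx)
  have h₁ : ∀ x ∈ (sortPair u v).1, x ∈ u + v := fun x hx =>
    sortPair_fst_add_snd u v ▸ Multiset.mem_add.2 (Or.inl hx)
  have h₂ : ∀ x ∈ (sortPair u v).2, x ∈ u + v := fun x hx =>
    sortPair_fst_add_snd u v ▸ Multiset.mem_add.2 (Or.inr hx)
  simp only [SortedPair, sortPair_map hf, Prod.ext_iff]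
  constructor
  · rintro (⟨e₁, e₂⟩ | ⟨e₁, e₂⟩)
    exacts [Or.inl ⟨hS h₁ hu e₁, hS h₂ hv e₂⟩, Or.inr ⟨hS h₁ hv e₁, hS h₂ hu e₂⟩]
  · rintro (⟨e₁, e₂⟩ | ⟨e₁, e₂⟩) <;> simp only [e₁, e₂, true_and, true_or, or_true]

theorem sorted_shift_invariant_general (t : ℕ) (ht : 1 ≤ t) (l₁ l₂ : List ℕ)
    (hs₁ : TSpread t ↑(1 :: l₁)) (hs₂ : TSpread t ↑(1 :: l₂)) :
    SortedPair ↑(1 :: l₁) ↑(1 :: l₂) ↔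
      SortedPair ↑(l₁.map (· - t)) ↑(l₂.map (· - t)) := by
  have hzero_or_gt : ∀ x ∈ (l₁ : Multiset ℕ) + l₂, x = 0 ∨ t < x := by
    intro x hx
    obtain h | h := Multiset.mem_add.1 hx
    · have := (List.pairwise_cons.1 hs₁.pairwise).1 x h
      omega
    · have := (List.pairwise_cons.1 hs₂.pairwise).1 x h
      omega
  have hinj : {x | x ∈ (l₁ : Multiset ℕ) + l₂}.InjOn (· - t) := fun x hx y hy hxy => by
    have := hzero_or_gt x hx
    have := hzero_or_gt y hy
    simp only at hxy
    omega
  rw [← Multiset.cons_coe, ← Multiset.cons_coe, sortedPair_cons_cons_iff, ← Multiset.map_coe,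
    ← Multiset.map_coe, sortedPair_map_iff (fun _ _ h => Nat.sub_le_sub_right h t) hinj]

/-- sortedness of pairs of t-spread monomials starting with x₁ is invariant
under deleting x₁ and shifting indices down by t. -/
theorem sorted_shift_invariant (t d : ℕ) (ht : 1 ≤ t) (l₁ l₂ : List ℕ)
    (h₁ : l₁.length = d - 1) (h₂ : l₂.length = d - 1)
    (hs₁ : TSpread t ↑(1 :: l₁)) (hs₂ : TSpread t ↑(1 :: l₂)) :
    SortedPair ↑(1 :: l₁) ↑(1 :: l₂) ↔
      SortedPair ↑(l₁.map (· - t)) ↑(l₂.map (· - t)) :=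
  sorted_shift_invariant_general t ht l₁ l₂ hs₁ hs₂
end

section
/- Let t ≥ 1, d ≥ 3, u = (∏_{i=1}^{d−1} x_{(i−1)t+2})·x_{(d−1)t+3}. With w_1 = (∏_{j=1}^{a} x_{(j−1)t+1})(∏_{j=a+1}^{d} x_{(j−1)t+2}) and w_2 = (∏_{j=1}^{b} x_{(j−1)t+1})(∏_{j=b+1}^{d−1} x_{(j−1)t+2})·x_{(d−1)t+3}, the pair (w_1, w_2) is sorted if and only if a ≥ b. -/
/-!
The sorting operator only sees the product `w₁ w₂`. When `b ≤ a` the indices of `w₁` and `w₂`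
interleave (the `j`-th index of `w₁` is at most the `j`-th of `w₂`, which is below the
`(j+1)`-st of `w₁`), so sorting returns `(w₁, w₂)`. When `a < b`, `w₁ w₂` is also the product of
the A-monomial with parameter `b` and the B-monomial with parameter `a`, a pair that interleaves
by the first case; so sorting returns that pair, and it is neither `(w₁, w₂)` nor `(w₂, w₁)`:
`x_{at+1}` divides its first entry but not `w₁`, and `x_{(d-1)t+3}` divides `w₂` but not `w₁`.
-/

theorem altSplit_flatMap_pair {α β : Type*} (P Q : α → β) :
    ∀ l : List α, altSplit (l.flatMap fun j => [P j, Q j]) = (l.map P, l.map Q)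
  | [] => rfl
  | a :: l => by simp [altSplit, altSplit_flatMap_pair P Q l]

theorem isChain_flatMap_pair {α β : Type*} [Preorder β] {P Q : α → β} :
    ∀ {l : List α}, (∀ i ∈ l, P i ≤ Q i) → l.IsChain (fun i j => Q i ≤ P j) →
      (l.flatMap fun j => [P j, Q j]).IsChain (· ≤ ·)
  | [], _, _ => List.isChain_nil
  | [a], hPQ, _ => List.isChain_pair.mpr (hPQ a List.mem_cons_self)
  | a :: b :: l, hPQ, hQP => by
    have ih := isChain_flatMap_pair (l := b :: l)
      (fun i hi => hPQ i (List.mem_cons_of_mem _ hi)) hQP.tail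
    simp only [List.flatMap_cons, List.cons_append] at ih ⊢
    exact List.isChain_cons_cons.mpr ⟨hPQ a List.mem_cons_self,
      List.isChain_cons_cons.mpr ⟨(List.isChain_cons_cons.mp hQP).1, ih⟩⟩

theorem Multiset.map_add_map_eq_bind {α β : Type*} (s : Multiset α) (f g : α → β) :
    s.map f + s.map g = s.bind fun j => {f j, g j} := by
  simp only [← Multiset.bind_singleton, ← Multiset.bind_add, Multiset.singleton_add,
    Multiset.insert_eq_cons]

theorem sortPair_eq_of_add_eq {u v u' v' : Multiset ℕ} (h : u + v = u' + v') :
    sortPair u v = sortPair u' v' := by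
  simp only [sortPair, h]

theorem sortPair_eq_of_interleave {α : Type*} {l : List α} {P Q : α → ℕ}
    (hPQ : ∀ i ∈ l, P i ≤ Q i) (hQP : l.IsChain fun i j => Q i ≤ P j) {u v : Multiset ℕ}
    (h : u + v = (l : Multiset α).map P + (l : Multiset α).map Q) :
    sortPair u v = ((l : Multiset α).map P, (l : Multiset α).map Q) := by
  set L := l.flatMap fun j => [P j, Q j]
  have hL : (L : Multiset ℕ) = u + v := by
    rw [h, Multiset.map_add_map_eq_bind, ← Multiset.coe_bind]
    rfl
  have hsort : mSort (u + v) = L :=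
    List.Perm.eq_of_pairwise' (Multiset.pairwise_sort _ _)
      (List.isChain_iff_pairwise.mp (isChain_flatMap_pair hPQ hQP))
      (Multiset.coe_eq_coe.mp (by rw [hL]; exact Multiset.sort_eq _ _))
  simp only [sortPair, hsort, L, altSplit_flatMap_pair, Multiset.map_coe]

/-- The A-family monomial's indices, counted from `j = 0`. -/
def indexA (t a j : ℕ) : ℕ := if j < a then j * t + 1 else j * t + 2

/-- The B-family monomial's indices, with its last index `(d - 1) t + 3` placed at `j = d - 1`. -/
def indexB (t d b j : ℕ) : ℕ := if j + 1 = d then j * t + 3 else indexA t b j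

def monomialA (t d a : ℕ) : Multiset ℕ := (Multiset.range d).map (indexA t a)

def monomialB (t d b : ℕ) : Multiset ℕ :=
  (Multiset.range (d - 1)).map (indexA t b) + {(d - 1) * t + 3}

section Families

variable {t d a b : ℕ}

theorem indexA_antitone (hba : b ≤ a) (j : ℕ) : indexA t a j ≤ indexA t b j := by
  unfold indexA; split_ifs <;> omega

theorem indexA_le (a j : ℕ) : indexA t a j ≤ j * t + 2 := by
  unfold indexA; split_ifs <;> omega

theorem monomialB_eq_map_indexB (hd : 1 ≤ d) :
    monomialB t d b = (Multiset.range d).map (indexB t d b) := by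
  obtain ⟨n, rfl⟩ : ∃ n, d = n + 1 := ⟨d - 1, by omega⟩
  have hmap : (Multiset.range n).map (indexB t (n + 1) b) = (Multiset.range n).map (indexA t b) :=
    Multiset.map_congr rfl fun j hj => if_neg (by simp at hj; omega)
  simp [monomialB, Multiset.range_succ, hmap, indexB, ← Multiset.singleton_add, add_comm]

theorem sortPair_monomialA_monomialB (ht : 1 ≤ t) (hd : 1 ≤ d) (hba : b ≤ a) :
    sortPair (monomialA t d a) (monomialB t d b) = (monomialA t d a, monomialB t d b) := by
  rw [monomialB_eq_map_indexB hd]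
  refine sortPair_eq_of_interleave (l := List.range d) (fun j _ => ?_) ?_ rfl
  · unfold indexB
    split_ifs
    · exact (indexA_le a j).trans (by omega)
    · exact indexA_antitone hba j
  · obtain ⟨n, rfl⟩ : ∃ n, d = n + 1 := ⟨d - 1, by omega⟩
    refine (List.isChain_range_succ _ n).mpr fun j hj => ?_
    have hstep : j * t + t ≤ (j + 1) * t := by rw [Nat.succ_mul]
    have hnext : (j + 1) * t + 1 ≤ indexA t a (j + 1) := by unfold indexA; split_ifs <;> omega
    have hcur := indexA_le (t := t) b j
    simp only [indexB, Nat.succ_eq_add_one, if_neg (show j + 1 ≠ n + 1 by omega)]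
    omega

/-- Off the last position `indexB` is `indexA`, and at it both `indexA`s equal `(d - 1) t + 2`,
so each position contributes the same pair of indices to both sides. -/
theorem monomialA_add_monomialB_comm (ha : a < d) (hb : b < d) :
    monomialA t d a + monomialB t d b = monomialA t d b + monomialB t d a := by
  rw [monomialB_eq_map_indexB (by omega), monomialB_eq_map_indexB (by omega), monomialA,
    monomialA, Multiset.map_add_map_eq_bind, Multiset.map_add_map_eq_bind]
  refine Multiset.bind_congr fun j hj => ?_
  rw [Multiset.mem_range] at hj
  unfold indexB
  split_ifs with hlast
  · simp only [indexA, if_neg (show ¬j < a by omega), if_neg (show ¬j < b by omega)]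
  · exact Multiset.pair_comm _ _

theorem top_notMem_monomialA : (d - 1) * t + 3 ∉ monomialA t d a := by
  simp only [monomialA, Multiset.mem_map, Multiset.mem_range, not_exists, not_and]
  intro j hj hval
  have : j * t ≤ (d - 1) * t := Nat.mul_le_mul_right t (by omega)
  have := indexA_le (t := t) a j
  omega

theorem monomialB_ne_monomialA : monomialB t d b ≠ monomialA t d a := by
  intro h
  apply top_notMem_monomialA (t := t) (d := d) (a := a)
  rw [← h, monomialB]
  exact Multiset.mem_add.mpr (Or.inr (Multiset.mem_singleton_self _))

theorem monomialA_ne_of_lt (ht : 1 ≤ t) (hab : a < b) (hb : b < d) :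
    monomialA t d b ≠ monomialA t d a := by
  have hmem : a * t + 1 ∈ monomialA t d b :=
    Multiset.mem_map.mpr ⟨a, Multiset.mem_range.mpr (by omega), if_pos hab⟩
  intro h
  rw [h, monomialA, Multiset.mem_map] at hmem
  obtain ⟨j, -, hval⟩ := hmem
  unfold indexA at hval
  split_ifs at hval with hja
  · have : j * t < a * t := Nat.mul_lt_mul_of_lt_of_le hja le_rfl ht
    omega
  · have : a * t ≤ j * t := Nat.mul_le_mul_right t (by omega)
    omega

end Families

theorem sorted_A_B_iff_general (t d : ℕ) (ht : 1 ≤ t) (hd : 3 ≤ d) (a b : ℕ)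
    (ha : a ≤ d - 1) (hb2 : b ≤ d - 1) :
    SortedPair
      ↑((List.range d).map (fun j => if j < a then j * t + 1 else j * t + 2))
      (↑((List.range (d - 1)).map (fun j => if j < b then j * t + 1 else j * t + 2)) +
        {(d - 1) * t + 3}) ↔ b ≤ a := by
  change SortedPair (monomialA t d a) (monomialB t d b) ↔ b ≤ a
  refine ⟨fun hsorted => ?_, fun hba => Or.inl (sortPair_monomialA_monomialB ht (by omega) hba)⟩
  by_contra! hab
  have hswap :
      sortPair (monomialA t d a) (monomialB t d b) = (monomialA t d b, monomialB t d a) :=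
    (sortPair_eq_of_add_eq (monomialA_add_monomialB_comm (by omega) (by omega))).trans
      (sortPair_monomialA_monomialB ht (by omega) hab.le)
  rcases hsorted with h | h <;> rw [hswap, Prod.mk.injEq] at h
  · exact monomialA_ne_of_lt ht hab (by omega) h.1
  · exact monomialB_ne_monomialA h.2

/-- the pair (w₁, w₂), with w₁ in the A-family with parameter a and w₂
in the B-family with parameter b, is sorted if and only if a ≥ b. -/
theorem sorted_A_B_iff (t d : ℕ) (ht : 1 ≤ t) (hd : 3 ≤ d) (a b : ℕ)
    (ha : a ≤ d - 1) (hb1 : 1 ≤ b) (hb2 : b ≤ d - 1) :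
    SortedPair
      ↑((List.range d).map (fun j => if j < a then j * t + 1 else j * t + 2))
      (↑((List.range (d - 1)).map (fun j => if j < b then j * t + 1 else j * t + 2)) +
        {(d - 1) * t + 3}) ↔ b ≤ a :=
  sorted_A_B_iff_general t d ht hd a b ha hb2
end

section
/- Fix t ≥ 1 and d ≥ 2. For any t-spread monomial u of degree d, the set of minimal generators of B_t(u) is sortable: if v, w are t-spread monomials componentwise dominated by u, then both components of sort(v,w) are again t-spread monomials componentwise dominated by u. -/
/-!
Let `L` be the weakly increasing merge of the index lists of `v` and `w`; the two components of
`sort(v, w)` consist of the entries of `L` at even and at odd positions. Everything follows from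
one order-statistic fact: in a sorted list, `L[k] < x` iff more than `k` entries are `< x`.

A `t`-spread list has at most one entry in any window `[x, x + t)`, so `L` has at most two
there; hence `L[k] + t ≤ L[k + 2]`, which makes both components `t`-spread. The first `j + 1`
indices of `v` and of `w` are all `≤ u_j`, so at least `2j + 2` entries of `L` are `≤ u_j`;
hence `L[2j + 1] ≤ u_j`, which bounds the `j`-th index of both components.
-/

namespace List

variable {α : Type*}

theorem Pairwise.getElem_lt_iff_lt_countP [Preorder α] [DecidableLT α] {L : List α}
    (hL : L.Pairwise (· ≤ ·)) (x : α) {k : ℕ} (hk : k < L.length) :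
    L[k] < x ↔ k < L.countP (· < x) := by
  have hsplit : L = L.take k ++ L[k] :: L.drop (k + 1) := by
    rw [← drop_eq_getElem_cons hk, take_append_drop]
  have hcount : L.countP (· < x) =
      (L.take k).countP (· < x) + (L[k] :: L.drop (k + 1)).countP (· < x) := by
    conv_lhs => rw [hsplit]
    exact countP_append
  have hlen : (L.take k).length = k := length_take_of_le hk.le
  rw [hcount]
  constructor
  · intro hkx
    have hbefore : ∀ a ∈ L.take k, a ≤ L[k] := by
      rw [hsplit] at hL
      exact fun a ha => (pairwise_append.1 hL).2.2 a ha _ mem_cons_self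
    have hall : (L.take k).countP (· < x) = (L.take k).length :=
      countP_eq_length.2 fun a ha => by simpa using (hbefore a ha).trans_lt hkx
    rw [hall, hlen, countP_cons, if_pos (by simpa using hkx)]
    omega
  · intro hlt
    by_contra hkx
    have hafter : ∀ b ∈ L.drop (k + 1), L[k] ≤ b := by
      have := hL.drop (i := k)
      rw [drop_eq_getElem_cons hk] at this
      exact fun b hb => rel_of_pairwise_cons this hb
    have hnone : (L[k] :: L.drop (k + 1)).countP (· < x) = 0 := by
      rw [countP_eq_zero]
      rintro b (_ | ⟨_, hb⟩)
      · simpa using hkx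
      · simpa using fun hbx => hkx ((hafter b hb).trans_lt hbx)
    have := hlen ▸ countP_le_length (p := (· < x)) (l := L.take k)
    omega

variable {t : ℕ}

theorem IsChain.pairwise_le {A : List ℕ} (hA : A.IsChain (fun a b => a + t ≤ b)) :
    A.Pairwise (· ≤ ·) :=
  isChain_iff_pairwise.1 (hA.imp fun a _ h => (Nat.le_add_right a t).trans h)

theorem IsChain.countP_lt_add_le {A : List ℕ} (hA : A.IsChain (fun a b => a + t ≤ b))
    (x : ℕ) : A.countP (· < x + t) ≤ A.countP (· < x) + 1 := by
  by_contra! hc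
  set m := A.countP (· < x)
  have hm : m + 1 < A.length := by
    have := countP_le_length (p := (· < x + t)) (l := A)
    omega
  have hlast : A[m + 1] < x + t := (hA.pairwise_le.getElem_lt_iff_lt_countP _ hm).2 hc
  have hfirst : ¬ A[m] < x := fun h =>
    lt_irrefl m ((hA.pairwise_le.getElem_lt_iff_lt_countP _ (by omega)).1 h)
  have := isChain_iff_getElem.1 hA m hm
  omega

theorem getElem_add_le_getElem_add_two_of_perm_append {L A B : List ℕ}
    (hL : L.Pairwise (· ≤ ·)) (hperm : L ~ A ++ B)
    (hA : A.IsChain (fun a b => a + t ≤ b)) (hB : B.IsChain (fun a b => a + t ≤ b))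
    (k : ℕ) (hk : k + 2 < L.length) : L[k] + t ≤ L[k + 2] := by
  by_contra! h
  have hcount (x : ℕ) : L.countP (· < x) = A.countP (· < x) + B.countP (· < x) := by
    rw [hperm.countP_eq, countP_append]
  have hupper := (hL.getElem_lt_iff_lt_countP _ hk).1 h
  have hlower : ¬ k < L.countP (· < L[k]) :=
    fun h' => lt_irrefl _ ((hL.getElem_lt_iff_lt_countP _ (by omega)).2 h')
  have := hA.countP_lt_add_le L[k]
  have := hB.countP_lt_add_le L[k]
  rw [hcount] at hupper hlower
  omega

theorem getElem_le_of_perm_append_of_forall₂ {L A B U : List ℕ}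
    (hL : L.Pairwise (· ≤ ·)) (hperm : L ~ A ++ B)
    (hA : A.Pairwise (· ≤ ·)) (hB : B.Pairwise (· ≤ ·))
    (hAU : Forall₂ (· ≤ ·) A U) (hBU : Forall₂ (· ≤ ·) B U)
    (j : ℕ) (hj : 2 * j + 1 < L.length) (hjU : j < U.length) : L[2 * j + 1] ≤ U[j] := by
  have hjA : j < A.length := hAU.length_eq ▸ hjU
  have hjB : j < B.length := hBU.length_eq ▸ hjU
  have hcA := (hA.getElem_lt_iff_lt_countP (U[j] + 1) hjA).1 (Nat.lt_succ_of_le (hAU.get hjA hjU))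
  have hcB := (hB.getElem_lt_iff_lt_countP (U[j] + 1) hjB).1 (Nat.lt_succ_of_le (hBU.get hjB hjU))
  have hcL : 2 * j + 1 < L.countP (· < U[j] + 1) := by
    rw [hperm.countP_eq, countP_append]
    omega
  exact Nat.le_of_lt_succ ((hL.getElem_lt_iff_lt_countP _ hj).2 hcL)

end List

section AltSplit

variable {α : Type*}

theorem length_altSplit (l : List α) :
    (altSplit l).1.length = (l.length + 1) / 2 ∧ (altSplit l).2.length = l.length / 2 := by
  induction l with
  | nil => simp [altSplit]
  | cons a l ih => simp only [altSplit, List.length_cons]; omega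

theorem getElem?_altSplit (l : List α) (i : ℕ) :
    (altSplit l).1[i]? = l[2 * i]? ∧ (altSplit l).2[i]? = l[2 * i + 1]? := by
  induction l generalizing i with
  | nil => simp [altSplit]
  | cons a l ih =>
    refine ⟨?_, by simpa [altSplit] using (ih i).1⟩
    cases i with
    | zero => simp [altSplit]
    | succ i => simpa [altSplit, Nat.mul_succ] using (ih i).2

theorem getElem_altSplit_fst {l : List α} {i : ℕ} (h : i < (altSplit l).1.length) :
    (altSplit l).1[i] = l[2 * i]'(by have := (length_altSplit l).1; omega) := by
  have := (length_altSplit l).1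
  simpa [List.getElem?_eq_getElem h, List.getElem?_eq_getElem (by omega : 2 * i < l.length)]
    using (getElem?_altSplit l i).1

theorem getElem_altSplit_snd {l : List α} {i : ℕ} (h : i < (altSplit l).2.length) :
    (altSplit l).2[i] = l[2 * i + 1]'(by have := (length_altSplit l).2; omega) := by
  have := (length_altSplit l).2
  simpa [List.getElem?_eq_getElem h, List.getElem?_eq_getElem (by omega : 2 * i + 1 < l.length)]
    using (getElem?_altSplit l i).2

theorem isChain_altSplit {R : α → α → Prop} {l : List α}
    (h : ∀ k (hk : k + 2 < l.length), R l[k] l[k + 2]) :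
    (altSplit l).1.IsChain R ∧ (altSplit l).2.IsChain R := by
  have ⟨h₁, h₂⟩ := length_altSplit l
  constructor <;> refine List.isChain_iff_getElem.2 fun i hi => ?_
  · simpa only [getElem_altSplit_fst, Nat.mul_succ] using h (2 * i) (by omega)
  · simpa only [getElem_altSplit_snd, Nat.mul_succ] using h (2 * i + 1) (by omega)

theorem forall₂_altSplit [Preorder α] {L U : List α} (hL : L.Pairwise (· ≤ ·))
    (hlen : L.length = 2 * U.length)
    (h : ∀ j (hj : 2 * j + 1 < L.length) (hjU : j < U.length), L[2 * j + 1] ≤ U[j]) :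
    List.Forall₂ (· ≤ ·) (altSplit L).1 U ∧ List.Forall₂ (· ≤ ·) (altSplit L).2 U := by
  have ⟨h₁, h₂⟩ := length_altSplit L
  constructor <;> refine List.forall₂_iff_get.2 ⟨by omega, fun i hi hiU => ?_⟩ <;>
    simp only [List.get_eq_getElem]
  · rw [getElem_altSplit_fst]
    exact (List.pairwise_iff_getElem.1 hL _ _ _ _ (by omega)).trans (h i (by omega) hiU)
  · rw [getElem_altSplit_snd]
    exact h i (by omega) hiU

end AltSplit

theorem mSort_coe {l : List ℕ} (hl : l.Pairwise (· ≤ ·)) : mSort l = l :=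
  List.mergeSort_eq_self _ hl

theorem perm_mSort_add (v w : Multiset ℕ) : (mSort (v + w)).Perm (mSort v ++ mSort w) := by
  rw [← Multiset.coe_eq_coe, ← Multiset.coe_add]
  simp only [mSort, Multiset.sort_eq]

theorem coe_mem_BtGens {t : ℕ} {u : Multiset ℕ} {l : List ℕ}
    (hs : l.IsChain (fun a b => a + t ≤ b)) (hd : List.Forall₂ (· ≤ ·) l (mSort u)) :
    (l : Multiset ℕ) ∈ BtGens t u := by
  have hsort : mSort l = l := mSort_coe hs.pairwise_le
  refine ⟨?_, ?_, ?_⟩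
  · rw [Multiset.coe_card, hd.length_eq, mSort, Multiset.length_sort]
  · rwa [TSpread, hsort]
  · rwa [Dominates, hsort]

theorem BtGens_sortable_general (t : ℕ) (u : Multiset ℕ) :
    ∀ v w : Multiset ℕ, v ∈ BtGens t u → w ∈ BtGens t u →
      (sortPair v w).1 ∈ BtGens t u ∧ (sortPair v w).2 ∈ BtGens t u := by
  rintro v w ⟨-, hv, hvu⟩ ⟨-, hw, hwu⟩
  have hL : (mSort (v + w)).Pairwise (· ≤ ·) := Multiset.pairwise_sort _ _
  have hperm := perm_mSort_add v w
  have hlen : (mSort (v + w)).length = 2 * (mSort u).length := by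
    rw [hperm.length_eq, List.length_append, hvu.length_eq, hwu.length_eq, two_mul]
  obtain ⟨hs₁, hs₂⟩ := isChain_altSplit (R := fun a b => a + t ≤ b)
    (List.getElem_add_le_getElem_add_two_of_perm_append hL hperm hv hw)
  obtain ⟨hd₁, hd₂⟩ := forall₂_altSplit hL hlen
    (List.getElem_le_of_perm_append_of_forall₂ hL hperm
      (Multiset.pairwise_sort _ _) (Multiset.pairwise_sort _ _) hvu hwu)
  exact ⟨coe_mem_BtGens hs₁ hd₁, coe_mem_BtGens hs₂ hd₂⟩

/-- the set of minimal generators of B_t(u) is sortable: both components of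
sort(v,w) are again t-spread monomials componentwise dominated by u. -/
theorem BtGens_sortable (t d : ℕ) (ht : 1 ≤ t) (hd : 2 ≤ d) (u : Multiset ℕ)
    (hcard : Multiset.card u = d) (hu : TSpread t u) :
    ∀ v w : Multiset ℕ, v ∈ BtGens t u → w ∈ BtGens t u →
      (sortPair v w).1 ∈ BtGens t u ∧ (sortPair v w).2 ∈ BtGens t u :=
  BtGens_sortable_general t u
end
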